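/- Let D and L be independent integrable nonnegative random variables with right-unbounded support, and {L_n} i.i.d. copies of L independent of D. Define τ = inf{k≥0 : L_k > D} and the checkpointing time T^C = Σ_{i=0}^{τ} L_i. Then E[T^C] = E[L] · ∫_0^∞ (1 / P[L>z]) f_D(dz), where f_D is the distribution of D. -/

import Mathlib

/-!
Write `T^C = ∑ᵢ Lᵢ 𝟙{i ≤ τ}`. Off a null set `τ` is finite, and then `{i ≤ τ}` is the event
that the first `i` attempts fail, `{Lⱼ ≤ D for all j < i}`. Since `D` is independent of the
sequence `(Lₙ)`, we may condition on `D = z`; as `Lᵢ` is independent of `L₀, …, Lᵢ₋₁`, the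
`i`-th term then has expectation `E[L] · P[L ≤ z]^i`. Summing the geometric series
`∑ᵢ P[L ≤ z]^i = 1 / P[L > z]` gives the formula. The same computation shows that the
probability that the first `i` attempts fail is `∫ P[L ≤ z]^i f_D(dz)`, which tends to `0`
because `P[L > z] > 0` for every `z`: this is why `τ` is almost surely finite.
-/

open MeasureTheory ProbabilityTheory Filter Set
open scoped ENNReal Topology

namespace ProbabilityTheory

variable {Ω : Type*} [MeasurableSpace Ω] {P : Measure Ω} {α β : Type*} [MeasurableSpace α]
  [MeasurableSpace β] {X : Ω → α} {Y : Ω → β}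

theorem IndepFun.lintegral_comp_prodMk [IsFiniteMeasure P] (h : IndepFun X Y P)
    (hX : Measurable X) (hY : Measurable Y) {g : α × β → ℝ≥0∞} (hg : Measurable g) :
    ∫⁻ ω, g (X ω, Y ω) ∂P = ∫⁻ x, ∫⁻ ω, g (x, Y ω) ∂P ∂(P.map X) := by
  rw [← lintegral_map hg (hX.prodMk hY),
    (indepFun_iff_map_prod_eq_prod_map_map hX.aemeasurable hY.aemeasurable).mp h,
    lintegral_prod _ hg.aemeasurable]
  exact lintegral_congr fun x => lintegral_map (hg.comp measurable_prodMk_left) hY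

theorem IndepFun.lintegral_indicator_preimage (h : IndepFun X Y P) (hX : Measurable X)
    (hY : Measurable Y) {s : Set β} (hs : MeasurableSet s) {f : α → ℝ≥0∞} (hf : Measurable f) :
    ∫⁻ ω, (Y ⁻¹' s).indicator (fun ω => f (X ω)) ω ∂P = (∫⁻ ω, f (X ω) ∂P) * P (Y ⁻¹' s) := by
  have hprod : (Y ⁻¹' s).indicator (fun ω => f (X ω)) = (f ∘ X) * (s.indicator 1 ∘ Y) := by
    ext ω
    by_cases hω : Y ω ∈ s <;> simp [hω]
  rw [hprod, lintegral_mul_eq_lintegral_mul_lintegral_of_indepFun (hf.comp hX)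
    ((measurable_one.indicator hs).comp hY) (h.comp hf (measurable_one.indicator hs)),
    ← lintegral_indicator_one (hY hs)]
  rfl

theorem iIndepFun.indepFun_option_elim {ι : Type*} {X : Ω → α} {Y : ι → Ω → α}
    (h : iIndepFun (fun i => Option.elim i X Y) P) (hX : Measurable X)
    (hY : ∀ i, Measurable (Y i)) :
    IndepFun X (fun ω i => Y i ω) P := by
  have hmeas : ∀ k, Measurable (Option.elim k X Y) := by
    rintro (_ | i)
    exacts [hX, hY i]
  have hsplit := indep_iSup_of_disjoint (fun k => (hmeas k).comap_le) h.iIndep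
    (S := {none}) (T := range some) (by simp)
  rw [IndepFun_iff_Indep]
  refine indep_of_indep_of_le_right (indep_of_indep_of_le_left hsplit ?_) ?_
  · exact le_iSup₂_of_le (f := fun k (_ : k ∈ ({none} : Set (Option ι))) => _) none rfl le_rfl
  · simp_rw [MeasurableSpace.pi, MeasurableSpace.comap_iSup, MeasurableSpace.comap_comp]
    exact iSup_le fun i => le_iSup₂_of_le (some i) ⟨i, rfl⟩ le_rfl

end ProbabilityTheory

theorem MeasureTheory.tendsto_lintegral_pow_atTop_zero {α : Type*} [MeasurableSpace α]
    {μ : Measure α} [IsFiniteMeasure μ] {q : α → ℝ≥0∞} (hq : Measurable q)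
    (hq1 : ∀ x, q x < 1) :
    Tendsto (fun n => ∫⁻ x, q x ^ n ∂μ) atTop (𝓝 0) := by
  simpa using tendsto_lintegral_of_dominated_convergence (fun _ => 1)
    (fun n => hq.pow_const n) (fun n => ae_of_all _ fun x => pow_le_one₀ bot_le (hq1 x).le)
    (by simp) (ae_of_all _ fun x => ENNReal.tendsto_pow_atTop_nhds_zero_of_lt_one (hq1 x))

theorem Nat.le_sInf_setOf_iff {p : ℕ → Prop} (h : ∃ k, p k) {i : ℕ} :
    i ≤ sInf {k | p k} ↔ ∀ j < i, ¬p j := by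
  classical
  rw [Nat.sInf_def (s := {k | p k}) h, Nat.le_find_iff]
  rfl

namespace Checkpoint

variable {Ω : Type*} {D L0 : Ω → ℝ} {L : ℕ → Ω → ℝ}

def failsBefore (D : Ω → ℝ) (L : ℕ → Ω → ℝ) (i : ℕ) : Set Ω := {ω | ∀ j < i, L j ω ≤ D ω}

theorem ofReal_sum_range_sInf_eq_tsum_indicator {ω : Ω} (hL : ∀ n, 0 ≤ L n ω)
    (h : ∃ k, D ω < L k ω) :
    ENNReal.ofReal (∑ i ∈ Finset.range (sInf {k | D ω < L k ω} + 1), L i ω)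
      = ∑' i, (failsBefore D L i).indicator (fun ω => ENNReal.ofReal (L i ω)) ω := by
  rw [ENNReal.ofReal_sum_of_nonneg fun i _ => hL i, sum_eq_tsum_indicator]
  refine tsum_congr fun i => ?_
  simp only [indicator, Finset.coe_range, mem_Iio, Nat.lt_succ_iff,
    Nat.le_sInf_setOf_iff h, not_lt, failsBefore, mem_ofPred_eq]
  congr

variable [MeasurableSpace Ω] {P : Measure Ω}

theorem measurableSet_failsBefore (hD : Measurable D) (hL : ∀ n, Measurable (L n)) (i : ℕ) :
    MeasurableSet (failsBefore D L i) := by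
  simp only [failsBefore, ofPred_forall]
  exact .iInter fun j => .iInter fun _ => measurableSet_le (hL j) hD

theorem monotone_measure_setOf_le : Monotone fun z : ℝ => P {ω | L0 ω ≤ z} :=
  fun _ _ hab => measure_mono fun _ h => le_trans h hab

theorem lintegral_indicator_failsBefore_const (hL : iIndepFun L P)
    (hLmeas : ∀ n, Measurable (L n)) (hid : ∀ n, IdentDistrib (L n) L0 P P) (z : ℝ)
    {f : ℝ → ℝ≥0∞} (hf : Measurable f) (i : ℕ) :
    ∫⁻ ω, (failsBefore (fun _ => z) L i).indicator (fun ω => f (L i ω)) ω ∂P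
      = (∫⁻ ω, f (L0 ω) ∂P) * P {ω | L0 ω ≤ z} ^ i := by
  set Y : Ω → (Finset.range i → ℝ) := fun ω j => L j ω
  have hY : failsBefore (fun _ => z) L i = Y ⁻¹' univ.pi fun _ => Iic z := by
    ext ω
    simp only [failsBefore, mem_ofPred_eq, mem_preimage, mem_univ_pi, mem_Iic, Subtype.forall,
      Finset.mem_range, Y]
  have hYinter : Y ⁻¹' univ.pi (fun _ => Iic z) = ⋂ j ∈ Finset.range i, L j ⁻¹' Iic z := by
    ext ω
    simp only [mem_preimage, mem_univ_pi, mem_Iic, Subtype.forall, Finset.mem_range, mem_iInter,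
      Y]
  have hindep : IndepFun (L i) Y P := by
    have h := hL.indepFun_finset {i} (Finset.range i) (by simp) hLmeas
    exact h.comp (measurable_pi_apply ⟨i, Finset.mem_singleton_self i⟩) measurable_id
  have hident : ∫⁻ ω, f (L i ω) ∂P = ∫⁻ ω, f (L0 ω) ∂P := ((hid i).comp hf).lintegral_eq
  rw [hY, hindep.lintegral_indicator_preimage (hLmeas i) (measurable_pi_lambda _ fun j => hLmeas j)
    (.univ_pi fun _ => measurableSet_Iic) hf, hident, hYinter,
    hL.meas_biInter fun j _ => ⟨Iic z, measurableSet_Iic, rfl⟩,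
    Finset.prod_congr rfl fun j _ => (hid j).measure_mem_eq measurableSet_Iic,
    Finset.prod_const, Finset.card_range]
  rfl

variable [IsProbabilityMeasure P]

theorem measure_setOf_lt_eq_one_sub (hL0 : AEMeasurable L0 P) (z : ℝ) :
    P {ω | z < L0 ω} = 1 - P {ω | L0 ω ≤ z} := by
  rw [show {ω | z < L0 ω} = {ω | L0 ω ≤ z}ᶜ by ext; simp]
  exact prob_compl_eq_one_sub₀ (hL0.nullMeasurable measurableSet_Iic)

theorem tsum_pow_measure_setOf_le (hL0 : AEMeasurable L0 P) (z : ℝ) :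
    ∑' i, P {ω | L0 ω ≤ z} ^ i = (P {ω | z < L0 ω})⁻¹ := by
  rw [ENNReal.tsum_geometric, measure_setOf_lt_eq_one_sub hL0]

theorem lintegral_indicator_failsBefore (hDW : IndepFun D (fun ω n => L n ω) P)
    (hL : iIndepFun L P) (hD : Measurable D) (hLmeas : ∀ n, Measurable (L n))
    (hid : ∀ n, IdentDistrib (L n) L0 P P) {f : ℝ → ℝ≥0∞} (hf : Measurable f) (i : ℕ) :
    ∫⁻ ω, (failsBefore D L i).indicator (fun ω => f (L i ω)) ω ∂P
      = (∫⁻ ω, f (L0 ω) ∂P) * ∫⁻ z, P {ω | L0 ω ≤ z} ^ i ∂(P.map D) := by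
  set S : Set (ℝ × (ℕ → ℝ)) := failsBefore Prod.fst (fun j p => p.2 j) i
  have hS : MeasurableSet S := measurableSet_failsBefore measurable_fst
    (fun j => (measurable_pi_apply j).comp measurable_snd) i
  calc _ = ∫⁻ ω, S.indicator (fun p => f (p.2 i)) (D ω, fun n => L n ω) ∂P := rfl
    _ = ∫⁻ z, ∫⁻ ω, S.indicator (fun p => f (p.2 i)) (z, fun n => L n ω) ∂P ∂(P.map D) :=
      hDW.lintegral_comp_prodMk hD (measurable_pi_lambda _ hLmeas)
        ((hf.comp ((measurable_pi_apply i).comp measurable_snd)).indicator hS)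
    _ = ∫⁻ z, (∫⁻ ω, f (L0 ω) ∂P) * P {ω | L0 ω ≤ z} ^ i ∂(P.map D) :=
      lintegral_congr fun z => lintegral_indicator_failsBefore_const hL hLmeas hid z hf i
    _ = _ := lintegral_const_mul _ (monotone_measure_setOf_le.measurable.pow_const i)

theorem ae_exists_lt (hDW : IndepFun D (fun ω n => L n ω) P)
    (hL : iIndepFun L P) (hD : Measurable D) (hLmeas : ∀ n, Measurable (L n))
    (hid : ∀ n, IdentDistrib (L n) L0 P P) (hsurv : ∀ z, 0 < P {ω | z < L0 ω}) :
    ∀ᵐ ω ∂P, ∃ k, D ω < L k ω := by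
  have hfail (i : ℕ) : P (failsBefore D L i) = ∫⁻ z, P {ω | L0 ω ≤ z} ^ i ∂(P.map D) := by
    simpa [lintegral_indicator_const (measurableSet_failsBefore hD hLmeas i)] using
      lintegral_indicator_failsBefore hDW hL hD hLmeas hid (f := fun _ => 1) measurable_const i
  have hq1 (z : ℝ) : P {ω | L0 ω ≤ z} < 1 := by
    simpa [measure_setOf_lt_eq_one_sub (hid 0).aemeasurable_snd] using hsurv z
  have := Measure.isProbabilityMeasure_map (μ := P) hD.aemeasurable
  rw [ae_iff, ← nonpos_iff_eq_zero]
  refine ge_of_tendsto (tendsto_lintegral_pow_atTop_zero (μ := P.map D)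
    monotone_measure_setOf_le.measurable hq1) (Eventually.of_forall fun n => ?_)
  rw [← hfail]
  exact measure_mono fun ω hω j _ => not_lt.mp fun h => hω ⟨j, h⟩

end Checkpoint

open Checkpoint

theorem checkpoint_expected_time_general
    {Ω : Type*} [MeasurableSpace Ω] (P : Measure Ω) [IsProbabilityMeasure P]
    (D L0 : Ω → ℝ) (L : ℕ → Ω → ℝ)
    (hDmeas : Measurable D) (hLmeas : ∀ n, Measurable (L n))
    (hLnn : ∀ n ω, 0 ≤ L n ω)
    (hLsupp : ∀ x : ℝ, 0 ≤ x → 0 < P {ω | x < L0 ω})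
    (hid : ∀ n, IdentDistrib (L n) L0 P P)
    (hindep : iIndepFun (β := fun _ : Option ℕ => ℝ)
        (fun i => Option.elim i D L) P)
    (τ : Ω → ℕ) (hτ : ∀ ω, τ ω = sInf {k : ℕ | D ω < L k ω})
    (T : Ω → ℝ) (hT : ∀ ω, T ω = ∑ i ∈ Finset.range (τ ω + 1), L i ω) :
    ∫⁻ ω, ENNReal.ofReal (T ω) ∂P
      = (∫⁻ ω, ENNReal.ofReal (L0 ω) ∂P)
        * ∫⁻ z, (P {ω | z < L0 ω})⁻¹ ∂(P.map D) := by
  have hL : iIndepFun L P := hindep.precomp (g := some) (Option.some_injective ℕ)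
  have hDW : IndepFun D (fun ω n => L n ω) P := hindep.indepFun_option_elim hDmeas hLmeas
  have hsurv (z : ℝ) : 0 < P {ω | z < L0 ω} :=
    (hLsupp _ (le_max_right z 0)).trans_le (measure_mono fun ω h => (le_max_left z 0).trans_lt h)
  calc ∫⁻ ω, ENNReal.ofReal (T ω) ∂P
      = ∫⁻ ω, ∑' i, (failsBefore D L i).indicator (fun ω => ENNReal.ofReal (L i ω)) ω ∂P := by
        refine lintegral_congr_ae ((ae_exists_lt hDW hL hDmeas hLmeas hid hsurv).mono
          fun ω hω => ?_)
        simp only [hT, hτ]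
        exact ofReal_sum_range_sInf_eq_tsum_indicator (fun n => hLnn n ω) hω
    _ = ∑' i, (∫⁻ ω, ENNReal.ofReal (L0 ω) ∂P) * ∫⁻ z, P {ω | L0 ω ≤ z} ^ i ∂(P.map D) := by
        rw [lintegral_tsum fun i => ((hLmeas i).ennreal_ofReal.indicator
          (measurableSet_failsBefore hDmeas hLmeas i)).aemeasurable]
        exact tsum_congr (lintegral_indicator_failsBefore hDW hL hDmeas hLmeas hid
          ENNReal.measurable_ofReal)
    _ = _ := by
        rw [ENNReal.tsum_mul_left, ← lintegral_tsum fun i =>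
          (monotone_measure_setOf_le.measurable.pow_const i).aemeasurable]
        simp_rw [tsum_pow_measure_setOf_le (hid 0).aemeasurable_snd]

/-- Expected checkpointing time formula:
`E[T^C] = E[L] · ∫₀^∞ (1 / P[L>z]) f_D(dz)`. -/
theorem checkpoint_expected_time
    {Ω : Type*} [MeasurableSpace Ω] (P : Measure Ω) [IsProbabilityMeasure P]
    (D L0 : Ω → ℝ) (L : ℕ → Ω → ℝ)
    (hDmeas : Measurable D) (hL0meas : Measurable L0) (hLmeas : ∀ n, Measurable (L n))
    (hDnn : ∀ ω, 0 ≤ D ω) (hL0nn : ∀ ω, 0 ≤ L0 ω) (hLnn : ∀ n ω, 0 ≤ L n ω)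
    (hDint : Integrable D P) (hL0int : Integrable L0 P)
    (hDsupp : ∀ x : ℝ, 0 ≤ x → 0 < P {ω | x < D ω})
    (hLsupp : ∀ x : ℝ, 0 ≤ x → 0 < P {ω | x < L0 ω})
    (hid : ∀ n, IdentDistrib (L n) L0 P P)
    (hindep : iIndepFun (β := fun _ : Option ℕ => ℝ)
        (fun i => Option.elim i D L) P)
    (τ : Ω → ℕ) (hτ : ∀ ω, τ ω = sInf {k : ℕ | D ω < L k ω})
    (T : Ω → ℝ) (hT : ∀ ω, T ω = ∑ i ∈ Finset.range (τ ω + 1), L i ω) :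
    ∫⁻ ω, ENNReal.ofReal (T ω) ∂P
      = (∫⁻ ω, ENNReal.ofReal (L0 ω) ∂P)
        * ∫⁻ z, (P {ω | z < L0 ω})⁻¹ ∂(P.map D) :=
  checkpoint_expected_time_general P D L0 L hDmeas hLmeas hLnn hLsupp hid hindep τ hτ T hT
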